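/- arXiv:1709.03700 — 6 statements merged into one kernel-verified Lean document; each statement's English description precedes it below -/
import Mathlib

section
/- Let X be a d-space and let F be a nonempty irreducible closed subset of X. If F is a down-linear element of the poset Irr(X) of nonempty irreducible closed sets ordered by inclusion (i.e., the set of irreducible closed subsets contained in F forms a chain), then F = cl({x}) for some point x ∈ X. -/
/-!
Since `F` is down-linear in `Irr X`, the point closures `cl {x}` with `x ∈ F` form a chain, so `F`
is directed in the specialization order and has a supremum `s`. The directed set `F` converges to
`s` and `F` is closed, so `s ∈ F`; as `s` is an upper bound of `F`, this gives `F = cl {s}`.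
-/

/-- The specialization order: `x ≤ y` iff `x ∈ cl({y})`. -/
def sle {X : Type*} [TopologicalSpace X] (x y : X) : Prop := x ∈ closure {y}

/-- `s` is the supremum of `D` with respect to the specialization order. -/
def sIsLUB {X : Type*} [TopologicalSpace X] (D : Set X) (s : X) : Prop :=
  (∀ d ∈ D, sle d s) ∧ ∀ b, (∀ d ∈ D, sle d b) → sle s b

/-- A d-space (monotone convergence space): `T₀`, the specialization order is
directed complete, and every directed set converges (as a net) to its supremum. -/
def IsDSpace (X : Type*) [TopologicalSpace X] : Prop :=
  T0Space X ∧
  (∀ D : Set X, D.Nonempty → DirectedOn sle D → ∃ s, sIsLUB D s) ∧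
  (∀ D : Set X, D.Nonempty → DirectedOn sle D → ∀ s, sIsLUB D s →
    ∀ U : Set X, IsOpen U → s ∈ U → ∃ d ∈ D, ∀ e ∈ D, sle d e → e ∈ U)

/-- The poset of nonempty irreducible closed subsets, ordered by inclusion. -/
abbrev Irr (X : Type*) [TopologicalSpace X] := {F : Set X // IsClosed F ∧ IsIrreducible F}

theorem sle_iff_closure_subset {X : Type*} [TopologicalSpace X] {x y : X} :
    sle x y ↔ closure ({x} : Set X) ⊆ closure {y} := by
  rw [sle, ← specializes_iff_mem_closure, specializes_iff_closure_subset]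

def Irr.closureSingleton {X : Type*} [TopologicalSpace X] (x : X) : Irr X :=
  ⟨closure {x}, isClosed_closure, isIrreducible_singleton.closure⟩

theorem directedOn_sle_of_isChain {X : Type*} [TopologicalSpace X] (F : Irr X)
    (hdl : IsChain (· ≤ ·) {G : Irr X | G ≤ F}) : DirectedOn sle (F : Set X) := by
  have hmem : ∀ x ∈ (F : Set X), Irr.closureSingleton x ∈ {G : Irr X | G ≤ F} := fun x hx =>
    closure_minimal (Set.singleton_subset_iff.2 hx) F.2.1
  intro x hx y hy
  rcases hdl.total (hmem x hx) (hmem y hy) with hxy | hyx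
  · exact ⟨y, hy, sle_iff_closure_subset.2 hxy, sle_iff_closure_subset.2 le_rfl⟩
  · exact ⟨x, hx, sle_iff_closure_subset.2 le_rfl, sle_iff_closure_subset.2 hyx⟩

namespace IsDSpace

variable {X : Type*} [TopologicalSpace X]

theorem mem_of_sIsLUB_of_isClosed (hX : IsDSpace X) {C D : Set X} {s : X} (hC : IsClosed C)
    (hDC : D ⊆ C) (hne : D.Nonempty) (hdir : DirectedOn sle D) (hs : sIsLUB D s) : s ∈ C := by
  rw [← hC.closure_eq, mem_closure_iff]
  intro U hU hsU
  obtain ⟨d, hd, hdU⟩ := hX.2.2 D hne hdir s hs U hU hsU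
  exact ⟨d, hdU d hd (subset_closure rfl), hDC hd⟩

theorem exists_eq_closure_singleton_of_directedOn (hX : IsDSpace X) {F : Set X}
    (hF : IsClosed F) (hne : F.Nonempty) (hdir : DirectedOn sle F) :
    ∃ x : X, F = closure {x} := by
  obtain ⟨s, hs⟩ := hX.2.1 F hne hdir
  have hsF : s ∈ F := hX.mem_of_sIsLUB_of_isClosed hF subset_rfl hne hdir hs
  exact ⟨s, subset_antisymm (fun x hx => hs.1 x hx)
    (closure_minimal (Set.singleton_subset_iff.2 hsF) hF)⟩

end IsDSpace

/-- in a d-space, every down-linear element `F` of `Irr(X)` is the closure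
of a point. -/
theorem stmt3 {X : Type*} [TopologicalSpace X] (hX : IsDSpace X)
    (F : Irr X) (hdl : IsChain (· ≤ ·) {G : Irr X | G ≤ F}) :
    ∃ x : X, (F : Set X) = closure {x} :=
  hX.exists_eq_closure_singleton_of_directedOn F.2.1 F.2.2.nonempty
    (directedOn_sle_of_isChain F hdl)
end

section
/- Let X be a d-space and let F ∈ Irr(X) be the supremum in Irr(X) of a directed family of down-linear elements of Irr(X). Then F = cl({x}) for some x ∈ X. -/
/-! Every member of `𝒟` is down-linear, so its points are linearly preordered by specialization;
the d-space axioms then make it the closure of the supremum of its points. The points `x` with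
`cl {x} ∈ 𝒟` form a directed set, and the closure of its supremum is the supremum of `𝒟` in
`Irr X`, because a closed set containing a directed set contains its supremum. -/

namespace Irr

variable {X : Type*} [TopologicalSpace X]

def pointClosure (x : X) : Irr X := ⟨closure {x}, isClosed_closure, isIrreducible_singleton.closure⟩

theorem pointClosure_le_pointClosure {x y : X} : pointClosure x ≤ pointClosure y ↔ sle x y :=
  specializes_iff_closure_subset.symm.trans specializes_iff_mem_closure

theorem pointClosure_le_iff {x : X} {G : Irr X} : pointClosure x ≤ G ↔ x ∈ (G : Set X) :=
  G.2.1.closure_subset_iff.trans Set.singleton_subset_iff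

theorem directedOn_sle_of_isChain {G : Irr X} (hG : IsChain (· ≤ ·) {H : Irr X | H ≤ G}) :
    DirectedOn sle (G : Set X) := by
  intro x hx y hy
  rcases hG.total (pointClosure_le_iff.2 hx) (pointClosure_le_iff.2 hy) with hxy | hyx
  · exact ⟨y, hy, pointClosure_le_pointClosure.1 hxy, subset_closure rfl⟩
  · exact ⟨x, hx, subset_closure rfl, pointClosure_le_pointClosure.1 hyx⟩

end Irr

open Irr

namespace IsDSpace

variable {X : Type*} [TopologicalSpace X]

theorem sup_mem_of_isClosed (hX : IsDSpace X) {C D : Set X} (hC : IsClosed C)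
    (hD : D.Nonempty) (hDdir : DirectedOn sle D) (hDC : D ⊆ C) {s : X} (hs : sIsLUB D s) :
    s ∈ C := by
  by_contra hsC
  obtain ⟨d, hd, hdC⟩ := hX.2.2 D hD hDdir s hs Cᶜ hC.isOpen_compl hsC
  exact hdC d hd (subset_closure rfl) (hDC hd)

theorem isLUB_pointClosure_image (hX : IsDSpace X) {S : Set X} (hS : S.Nonempty)
    (hSdir : DirectedOn sle S) {s : X} (hs : sIsLUB S s) :
    IsLUB (pointClosure '' S) (pointClosure s) := by
  constructor
  · rintro _ ⟨x, hx, rfl⟩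
    exact pointClosure_le_pointClosure.2 (hs.1 x hx)
  · intro G hG
    have hSG : S ⊆ (G : Set X) := fun x hx => pointClosure_le_iff.1 (hG ⟨x, hx, rfl⟩)
    exact pointClosure_le_iff.2 (hX.sup_mem_of_isClosed G.2.1 hS hSdir hSG hs)

theorem exists_pointClosure_eq (hX : IsDSpace X) {G : Irr X}
    (hG : IsChain (· ≤ ·) {H : Irr X | H ≤ G}) : ∃ x, pointClosure x = G := by
  have hGdir := directedOn_sle_of_isChain hG
  obtain ⟨s, hs⟩ := hX.2.1 _ G.2.2.1 hGdir
  refine ⟨s, le_antisymm (pointClosure_le_iff.2 ?_) ?_⟩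
  · exact hX.sup_mem_of_isClosed G.2.1 G.2.2.1 hGdir le_rfl hs
  · exact hs.1

end IsDSpace

/-- in a d-space, if `F ∈ Irr(X)` is the supremum of a directed family of
down-linear elements of `Irr(X)`, then `F` is the closure of a point. -/
theorem stmt4 {X : Type*} [TopologicalSpace X] (hX : IsDSpace X)
    (F : Irr X) (𝒟 : Set (Irr X)) (hne : 𝒟.Nonempty)
    (hdir : DirectedOn (· ≤ ·) 𝒟)
    (hdl : ∀ G ∈ 𝒟, IsChain (· ≤ ·) {H : Irr X | H ≤ G})
    (hsup : IsLUB 𝒟 F) :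
    ∃ x : X, (F : Set X) = closure {x} := by
  have h𝒟 : pointClosure '' (pointClosure ⁻¹' 𝒟) = 𝒟 :=
    Set.image_preimage_eq_of_subset fun G hG => hX.exists_pointClosure_eq (hdl G hG)
  have hS : (pointClosure ⁻¹' 𝒟).Nonempty := by
    rw [← Set.image_nonempty, h𝒟]
    exact hne
  have hSdir : DirectedOn sle (pointClosure ⁻¹' 𝒟) := by
    rw [← h𝒟, directedOn_image] at hdir
    exact hdir.mono fun _ _ => pointClosure_le_pointClosure.1
  obtain ⟨s, hs⟩ := hX.2.1 _ hS hSdir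
  have hF : F = pointClosure s := hsup.unique (h𝒟 ▸ hX.isLUB_pointClosure_image hS hSdir hs)
  exact ⟨s, congrArg Subtype.val hF⟩
end

section
/- Let P be a dcpo whose Scott topology is sober and let Q be a dcpo whose Scott topology is bounded-sober. If the lattices of Scott closed subsets C_σ(P) and C_σ(Q) are order isomorphic, then P and Q are order isomorphic. -/
/-- A directed complete poset. -/
def Dcpo (P : Type*) [PartialOrder P] : Prop :=
  ∀ D : Set P, D.Nonempty → DirectedOn (· ≤ ·) D → ∃ a, IsLUB D a

/-- A Scott closed set: a lower set closed under suprema of directed subsets. -/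
def ScottClosed {P : Type*} [PartialOrder P] (A : Set P) : Prop :=
  IsLowerSet A ∧ ∀ D ⊆ A, D.Nonempty → DirectedOn (· ≤ ·) D → ∀ a, IsLUB D a → a ∈ A

/-- A nonempty irreducible Scott closed set. -/
def IrrClosed {P : Type*} [PartialOrder P] (A : Set P) : Prop :=
  A.Nonempty ∧ ScottClosed A ∧
    ∀ F₁ F₂ : Set P, ScottClosed F₁ → ScottClosed F₂ → A ⊆ F₁ ∪ F₂ → A ⊆ F₁ ∨ A ⊆ F₂

/-- The lattice `C_σ(P)` of Scott closed subsets, ordered by inclusion. -/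
abbrev Cσ (P : Type*) [PartialOrder P] := {A : Set P // ScottClosed A}

/-- The poset `Irr_σ(P)` of nonempty irreducible Scott closed subsets. -/
abbrev Irrσ (P : Type*) [PartialOrder P] := {A : Set P // IrrClosed A}

/-- An element is down-linear if its principal downset is a chain. -/
def DownLinear {P : Type*} [PartialOrder P] (a : P) : Prop :=
  IsChain (· ≤ ·) (Set.Iic a)

/-- A dcpo is sober if every nonempty irreducible Scott closed set is the Scott closure
(= principal downset) of a unique point. -/
def SoberD (P : Type*) [PartialOrder P] : Prop :=
  ∀ A : Set P, IrrClosed A → ∃! x, A = Set.Iic x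

/-- A dcpo is bounded-sober if every upper-bounded nonempty irreducible Scott closed set
is the principal downset of a point. -/
def BoundedSoberD (P : Type*) [PartialOrder P] : Prop :=
  ∀ A : Set P, IrrClosed A → (∃ b, ∀ x ∈ A, x ≤ b) → ∃ x, A = Set.Iic x

/-! Irreducible Scott closed sets are exactly the sup-prime elements of `C_σ`, so `e` restricts
to an isomorphism `Irr_σ P ≅ Irr_σ Q`, and sobriety of `P` turns it into `Φ : P ≅ Irr_σ Q`.
Then `f y := Φ⁻¹ (↓y)` is a Scott continuous order embedding `Q → P` whose image is a lower set:
anything below `↓y` in `Irr_σ Q` is bounded by `y`, hence principal by bounded sobriety. Such an `f`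
carries irreducible closed sets of `Q` to irreducible closed sets of `P`, which are principal;
pulling back, `Q` is sober, and `Q ≅ Irr_σ Q ≅ P`. -/

open Set Relation

section ScottClosed

variable {P Q : Type*} [PartialOrder P] [PartialOrder Q]

lemma scottClosed_Iic (x : P) : ScottClosed (Iic x) :=
  ⟨isLowerSet_Iic x, dirSupClosed_Iic x⟩

lemma irrClosed_Iic (x : P) : IrrClosed (Iic x) := by
  refine ⟨nonempty_Iic, scottClosed_Iic x, fun F₁ F₂ h₁ h₂ hsub => ?_⟩
  rcases hsub (le_refl x : x ∈ Iic x) with hx | hx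
  · exact Or.inl fun _ hz => h₁.1 hz hx
  · exact Or.inr fun _ hz => h₂.1 hz hx

lemma ScottClosed.union {A B : Set P} (hA : ScottClosed A) (hB : ScottClosed B) :
    ScottClosed (A ∪ B) :=
  ⟨hA.1.union hB.1, DirSupClosed.union hA.2 hB.2⟩

lemma ScottClosed.preimage {f : Q → P} (hf : ScottContinuous f) {F : Set P}
    (hF : ScottClosed F) : ScottClosed (f ⁻¹' F) :=
  ⟨hF.1.preimage hf.monotone, fun _ hD hne hdir _ hd =>
    hF.2 _ (image_subset_iff.2 hD) (hne.image f) (hdir.mono_comp hf.monotone) _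
      (hf hne hdir hd)⟩

end ScottClosed

section Lattice

variable {P Q : Type*} [PartialOrder P] [PartialOrder Q]

instance : SemilatticeSup (Cσ P) :=
  Subtype.semilatticeSup fun _ _ => ScottClosed.union

lemma Cσ.isMin_iff_val_eq_empty {A : Cσ P} : IsMin A ↔ A.1 = ∅ := by
  refine ⟨fun h => ?_, fun h B _ => by simp [← Subtype.coe_le_coe, h]⟩
  have hle : (⟨∅, isLowerSet_empty, DirSupClosed.empty⟩ : Cσ P) ≤ A := empty_subset _
  exact subset_empty_iff.1 (h hle)

lemma Cσ.irrClosed_iff_supPrime {A : Cσ P} : IrrClosed A.1 ↔ SupPrime A := by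
  rw [SupPrime, Cσ.isMin_iff_val_eq_empty, ← ne_eq, ← nonempty_iff_ne_empty]
  exact and_congr_right fun _ =>
    ⟨fun h F₁ F₂ hF => h.2 F₁.1 F₂.1 F₁.2 F₂.2 hF, fun h => ⟨A.2, fun F₁ F₂ h₁ h₂ hF =>
      @h ⟨F₁, h₁⟩ ⟨F₂, h₂⟩ hF⟩⟩

lemma OrderIso.supPrime_apply_iff {α β : Type*} [SemilatticeSup α] [SemilatticeSup β]
    (e : α ≃o β) {a : α} : SupPrime (e a) ↔ SupPrime a := by
  refine and_congr (not_congr e.isMin_apply) ⟨fun h b c hbc => ?_, fun h b c hbc => ?_⟩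
  · refine (h (b := e b) (c := e c) ?_).imp e.le_iff_le.1 e.le_iff_le.1
    rwa [← e.map_sup, e.le_iff_le]
  · refine (h (b := e.symm b) (c := e.symm c) ?_).imp e.le_symm_apply.1 e.le_symm_apply.1
    rwa [← e.symm.map_sup, e.le_symm_apply]

lemma IrrClosed.map_orderIso (e : Cσ P ≃o Cσ Q) {A : Cσ P} (hA : IrrClosed A.1) :
    IrrClosed (e A).1 :=
  Cσ.irrClosed_iff_supPrime.2 (e.supPrime_apply_iff.2 (Cσ.irrClosed_iff_supPrime.1 hA))

def irrσCongr (e : Cσ P ≃o Cσ Q) : Irrσ P ≃o Irrσ Q where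
  toFun A := ⟨e ⟨A, A.2.2.1⟩, IrrClosed.map_orderIso e A.2⟩
  invFun B := ⟨e.symm ⟨B, B.2.2.1⟩, IrrClosed.map_orderIso e.symm B.2⟩
  left_inv A := by simp
  right_inv B := by simp
  map_rel_iff' := e.le_iff_le

end Lattice

lemma OrderIso.scottContinuous {α β : Type*} [Preorder α] [Preorder β] (e : α ≃o β) :
    ScottContinuous e :=
  fun _ _ _ _ ha => e.isLUB_image'.2 ha

section Sober

variable {P Q : Type*} [PartialOrder P] [PartialOrder Q]

def principalIrr : P ↪o Irrσ P :=
  OrderEmbedding.ofMapLEIff (fun x => ⟨Iic x, irrClosed_Iic x⟩) fun _ _ => Iic_subset_Iic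

lemma scottContinuous_principalIrr : ScottContinuous (principalIrr : P → Irrσ P) := by
  intro D hne hdir d hd
  refine ⟨?_, fun B hB => ?_⟩
  · rintro _ ⟨x, hx, rfl⟩
    exact Iic_subset_Iic.2 (hd.1 hx)
  · have hDB : D ⊆ B.1 := fun x hx => hB ⟨x, hx, rfl⟩ (le_refl x)
    exact B.2.2.1.1.Iic_subset (B.2.2.1.2 D hDB hne hdir d hd)

lemma SoberD.of_exists_eq_Iic (h : ∀ A : Set P, IrrClosed A → ∃ x, A = Iic x) : SoberD P :=
  fun A hA => (h A hA).imp fun _ hx => ⟨hx, fun _ hy => Iic_injective (hy.symm.trans hx)⟩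

lemma SoberD.surjective_principalIrr (h : SoberD P) :
    Function.Surjective (principalIrr : P → Irrσ P) :=
  fun A => (h A.1 A.2).exists.imp fun _ hx => Subtype.ext hx.symm

noncomputable def SoberD.orderIsoIrrσ (h : SoberD P) : P ≃o Irrσ P :=
  OrderIso.ofSurjective principalIrr h.surjective_principalIrr

lemma BoundedSoberD.fibration_principalIrr (h : BoundedSoberD Q) :
    Fibration (· ≤ ·) (· ≤ ·) (principalIrr : Q → Irrσ Q) := by
  intro y B hB
  obtain ⟨z, hz⟩ := h B.1 B.2 ⟨y, fun x hx => hB hx⟩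
  exact ⟨z, hB (hz ▸ le_refl z), Subtype.ext hz.symm⟩

lemma DirSupClosed.image_orderEmbedding (hQ : Dcpo Q) (f : Q ↪o P) (hf : ScottContinuous f)
    {A : Set Q} (hA : DirSupClosed A) : DirSupClosed (f '' A) := by
  intro D' hD' hne hdir a ha
  set D := A ∩ f ⁻¹' D'
  have himg : f '' D = D' := subset_antisymm (by rintro _ ⟨y, hy, rfl⟩; exact hy.2)
    fun p hp => let ⟨y, hy, hyp⟩ := hD' hp; ⟨y, ⟨hy, show f y ∈ D' from hyp ▸ hp⟩, hyp⟩
  have hDne : D.Nonempty := (himg ▸ hne).of_image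
  have hDdir : DirectedOn (· ≤ ·) D := by
    intro y hy z hz
    obtain ⟨c, hc, hyc, hzc⟩ := hdir _ hy.2 _ hz.2
    obtain ⟨w, hw, rfl⟩ := hD' hc
    exact ⟨w, ⟨hw, hc⟩, f.le_iff_le.1 hyc, f.le_iff_le.1 hzc⟩
  obtain ⟨d, hd⟩ := hQ D hDne hDdir
  have hfd : IsLUB D' (f d) := himg ▸ hf hDne hDdir hd
  exact ⟨d, hA inter_subset_left hDne hDdir hd, hfd.unique ha⟩

lemma IrrClosed.image_orderEmbedding (hQ : Dcpo Q) (f : Q ↪o P) (hf : ScottContinuous f)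
    (hfib : Fibration (· ≤ ·) (· ≤ ·) f) {A : Set Q} (hA : IrrClosed A) : IrrClosed (f '' A) := by
  refine ⟨hA.1.image f, ⟨hA.2.1.1.image_fibration hfib,
    DirSupClosed.image_orderEmbedding hQ f hf hA.2.1.2⟩, fun F₁ F₂ h₁ h₂ hsub => ?_⟩
  simp only [image_subset_iff] at hsub ⊢
  exact hA.2.2 _ _ (h₁.preimage hf) (h₂.preimage hf) hsub

lemma SoberD.of_orderEmbedding (hP : SoberD P) (hQ : Dcpo Q) (f : Q ↪o P)
    (hf : ScottContinuous f) (hfib : Fibration (· ≤ ·) (· ≤ ·) f) : SoberD Q := by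
  refine SoberD.of_exists_eq_Iic fun A hA => ?_
  obtain ⟨x, hx⟩ := (hP _ (hA.image_orderEmbedding hQ f hf hfib)).exists
  obtain ⟨y, hyA, rfl⟩ : x ∈ f '' A := hx ▸ le_refl x
  exact ⟨y, subset_antisymm (fun z hz => f.le_iff_le.1 (hx.subset (mem_image_of_mem f hz)))
    (hA.2.1.1.Iic_subset hyA)⟩

end Sober

theorem stmt6_general {P Q : Type*} [PartialOrder P] [PartialOrder Q]
    (hQ : Dcpo Q) (hsP : SoberD P) (hbQ : BoundedSoberD Q)
    (e : Cσ P ≃o Cσ Q) : Nonempty (P ≃o Q) := by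
  let Φ : P ≃o Irrσ Q := hsP.orderIsoIrrσ.trans (irrσCongr e)
  let f : Q ↪o P := principalIrr.trans Φ.symm.toOrderEmbedding
  have hf : ScottContinuous f := scottContinuous_principalIrr.comp Φ.symm.scottContinuous
  have hfib : Fibration (· ≤ ·) (· ≤ ·) f := fun y b hb => by
    obtain ⟨z, hzy, hz⟩ := hbQ.fibration_principalIrr (Φ.le_symm_apply.1 hb)
    exact ⟨z, hzy, Φ.symm_apply_eq.2 hz⟩
  exact ⟨((hsP.of_orderEmbedding hQ f hf hfib).orderIsoIrrσ.trans Φ.symm).symm⟩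

/-- if `P` is a sober dcpo, `Q` is a bounded-sober dcpo and
`C_σ(P) ≅ C_σ(Q)`, then `P ≅ Q`. -/
theorem stmt6 {P Q : Type*} [PartialOrder P] [PartialOrder Q]
    (hP : Dcpo P) (hQ : Dcpo Q) (hsP : SoberD P) (hbQ : BoundedSoberD Q)
    (e : Cσ P ≃o Cσ Q) : Nonempty (P ≃o Q) :=
  stmt6_general hQ hsP hbQ e
end

section
/- Johnstone's dcpo X = ℕ × (ℕ ∪ {∞}) with order (m,n) ≤ (m',n') iff (m = m' and n ≤ n') or (n' = ∞ and n ≤ m') is a dcpo; X itself is an irreducible Scott closed set that is not the closure of any point; and every proper nonempty irreducible Scott closed subset of X is of the form ↓(m,n) for some (m,n) ∈ X. -/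
/-- The carrier of Johnstone's dcpo: `ℕ × (ℕ ∪ {∞})`. -/
structure J where
  m : ℕ
  n : WithTop ℕ

/-- Johnstone's order: `(m,n) ≤ (m',n')` iff `m = m' ∧ n ≤ n'`, or `n' = ∞ ∧ n ≤ m'`. -/
instance : PartialOrder J where
  le p q := (p.m = q.m ∧ p.n ≤ q.n) ∨ (q.n = ⊤ ∧ p.n ≤ (q.m : WithTop ℕ))
  le_refl p := Or.inl ⟨rfl, le_refl _⟩
  le_trans p q r hpq hqr := by
    rcases hpq with ⟨h1, h2⟩ | ⟨h1, h2⟩ <;> rcases hqr with ⟨h3, h4⟩ | ⟨h3, h4⟩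
    · exact Or.inl ⟨h1.trans h3, h2.trans h4⟩
    · exact Or.inr ⟨h3, h2.trans h4⟩
    · exact Or.inr ⟨top_le_iff.mp (h1 ▸ h4), h3 ▸ h2⟩
    · exact absurd (h1 ▸ h4) (not_le.mpr (WithTop.coe_lt_top r.m))
  le_antisymm p q hpq hqp := by
    obtain ⟨pm, pn⟩ := p; obtain ⟨qm, qn⟩ := q
    rcases hpq with ⟨h1, h2⟩ | ⟨h1, h2⟩ <;> rcases hqp with ⟨h3, h4⟩ | ⟨h3, h4⟩
    · simp only [J.mk.injEq]
      exact ⟨h1, le_antisymm h2 h4⟩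
    · have hq : qn = ⊤ := top_le_iff.mp ((show pn = ⊤ from h3) ▸ h2)
      exact absurd (hq ▸ h4) (not_le.mpr (WithTop.coe_lt_top pm))
    · have hp : pn = ⊤ := top_le_iff.mp ((show qn = ⊤ from h1) ▸ h4)
      exact absurd (hp ▸ h2) (not_le.mpr (WithTop.coe_lt_top qm))
    · exact absurd ((show qn = ⊤ from h1) ▸ h4) (not_le.mpr (WithTop.coe_lt_top pm))

/-!
In `J` a directed set either has a greatest element or climbs a whole column `(m, k)`, `k ∈ ℕ`,
with supremum `(m, ∞)`; hence `J` is a dcpo. Since `(m, k) ≤ (m', ∞)` whenever `k ≤ m'`, a Scott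
closed set containing infinitely many top points `(m', ∞)` is all of `J`. So `J` is irreducible
(one of two closed sets covering it contains infinitely many top points) but has no greatest
element. A proper irreducible closed set `A` has its top points in columns `< t` for some `t`. Let
`p` be the largest point of `A` in one column: `p = (a, ∞)` for a top point of `A` if there is
one, the supremum of any column of `A` otherwise. Removing from `A` the points of the column of
`p` at height `≥ t` leaves a Scott closed set without `p`, which together with `↓p` covers `A`;
irreducibility gives `A = ↓p`.
-/

section General

variable {P : Type*} [PartialOrder P]

lemma scottClosed_univ : ScottClosed (Set.univ : Set P) :=
  ⟨isLowerSet_univ, fun _ _ _ _ _ _ => Set.mem_univ _⟩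

lemma scottClosed_Iic_s8 (p : P) : ScottClosed (Set.Iic p) :=
  ⟨isLowerSet_Iic p, fun _ hD _ _ _ ha => ha.2 hD⟩

lemma IrrClosed.eq_Iic_of_subset_union {A F : Set P} {p : P} (hA : IrrClosed A) (hp : p ∈ A)
    (hF : ScottClosed F) (hpF : p ∉ F) (hAF : A ⊆ Set.Iic p ∪ F) : A = Set.Iic p := by
  rcases hA.2.2 _ _ (scottClosed_Iic_s8 p) hF hAF with h | h
  · exact h.antisymm (hA.2.1.1.Iic_subset hp)
  · exact absurd (h hp) hpF

end General

namespace J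

lemma eq_of_le_of_n_eq_top {x y : J} (hx : x.n = ⊤) (h : x ≤ y) : y = x := by
  obtain ⟨xm, xn⟩ := x
  obtain ⟨ym, yn⟩ := y
  dsimp only at hx
  subst hx
  rcases h with ⟨hm, h⟩ | ⟨-, h⟩
  · dsimp only at hm h
    rw [hm, top_le_iff.1 h]
  · exact absurd h (WithTop.not_top_le_coe ym)

lemma m_eq_of_le {x y : J} (hy : y.n ≠ ⊤) (h : x ≤ y) : x.m = y.m :=
  (h.resolve_right fun h' => hy h'.1).1

lemma isLUB_of_unbounded {D : Set J} {a : ℕ} (hD : ∀ d ∈ D, d.m = a)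
    (hub : ∀ k : ℕ, ∃ d ∈ D, (k : WithTop ℕ) < d.n) : IsLUB D ⟨a, ⊤⟩ := by
  refine ⟨fun d hd => Or.inl ⟨hD d hd, le_top⟩, fun u hu => ?_⟩
  obtain ⟨d, hd, hud⟩ := hub u.m
  have hum : u.m = a := by
    rcases hu hd with ⟨h, -⟩ | ⟨-, h⟩
    · exact h ▸ hD d hd
    · exact absurd h (not_le.2 hud)
  have hun : u.n = ⊤ := by
    by_contra hne
    obtain ⟨k, hk⟩ := WithTop.ne_top_iff_exists.1 hne
    obtain ⟨d, hd, hkd⟩ := hub k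
    rcases hu hd with ⟨-, h⟩ | ⟨h, -⟩
    · exact lt_irrefl _ (hkd.trans_le (h.trans hk.symm.le))
    · exact hne h
  exact Or.inl ⟨hum.symm, hun.ge⟩

lemma directedOn_isGreatest_or_unbounded {D : Set J} (hne : D.Nonempty)
    (hD : DirectedOn (· ≤ ·) D) :
    (∃ d, IsGreatest D d) ∨
      ∃ a : ℕ, (∀ d ∈ D, d.m = a) ∧ ∀ k : ℕ, ∃ d ∈ D, (k : WithTop ℕ) < d.n := by
  by_cases htop : ∃ d ∈ D, d.n = ⊤
  · obtain ⟨d, hd, hdn⟩ := htop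
    refine Or.inl ⟨d, hd, fun e he => ?_⟩
    obtain ⟨z, -, hez, hdz⟩ := hD e he d hd
    exact eq_of_le_of_n_eq_top hdn hdz ▸ hez
  push Not at htop
  obtain ⟨d₀, hd₀⟩ := hne
  have hcol : ∀ d ∈ D, d.m = d₀.m := fun d hd => by
    obtain ⟨z, hz, hdz, hd₀z⟩ := hD d hd d₀ hd₀
    exact (m_eq_of_le (htop z hz) hdz).trans (m_eq_of_le (htop z hz) hd₀z).symm
  by_cases hub : ∀ k : ℕ, ∃ d ∈ D, (k : WithTop ℕ) < d.n
  · exact Or.inr ⟨d₀.m, hcol, hub⟩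
  push Not at hub
  obtain ⟨b, hb⟩ := hub
  set S := {k : ℕ | ∃ d ∈ D, d.n = k}
  have hS : ∀ d ∈ D, ∃ k ∈ S, d.n = k := fun d hd => by
    obtain ⟨k, hk⟩ := WithTop.ne_top_iff_exists.1 (htop d hd)
    exact ⟨k, ⟨d, hd, hk.symm⟩, hk.symm⟩
  have hSbdd : BddAbove S :=
    ⟨b, fun _ ⟨d, hd, hdk⟩ => WithTop.coe_le_coe.1 (hdk.symm.le.trans (hb d hd))⟩
  obtain ⟨d, hd, hdn⟩ := Nat.sSup_mem ((hS d₀ hd₀).imp fun _ h => h.1) hSbdd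
  refine Or.inl ⟨d, hd, fun e he => ?_⟩
  obtain ⟨k, hk, hek⟩ := hS e he
  refine Or.inl ⟨(hcol e he).trans (hcol d hd).symm, ?_⟩
  rw [hek, hdn]
  exact WithTop.coe_le_coe.2 (le_csSup hSbdd hk)

theorem dcpo : Dcpo J := fun _ hne hD =>
  (directedOn_isGreatest_or_unbounded hne hD).elim (fun ⟨d, hd⟩ => ⟨d, hd.isLUB⟩)
    fun ⟨a, hcol, hub⟩ => ⟨⟨a, ⊤⟩, isLUB_of_unbounded hcol hub⟩

def topCols (A : Set J) : Set ℕ := {m | (⟨m, ⊤⟩ : J) ∈ A}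

end J

open J

namespace ScottClosed

variable {A : Set J}

lemma mk_top_mem (hA : ScottClosed A) {a : ℕ} (h : ∀ k : ℕ, (⟨a, k⟩ : J) ∈ A) :
    (⟨a, ⊤⟩ : J) ∈ A := by
  have hmono : Monotone fun k : ℕ => (⟨a, k⟩ : J) := fun _ _ hkl =>
    Or.inl ⟨rfl, WithTop.coe_le_coe.2 hkl⟩
  refine hA.2 _ (Set.range_subset_iff.2 h) (Set.range_nonempty _)
    (directedOn_range.2 hmono.directed_le) _ (isLUB_of_unbounded ?_ ?_)
  · rintro _ ⟨k, rfl⟩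
    rfl
  · exact fun k => ⟨_, ⟨k + 1, rfl⟩, WithTop.coe_lt_coe.2 k.lt_succ_self⟩

lemma eq_univ_of_infinite_topCols (hA : ScottClosed A) (h : (topCols A).Infinite) :
    A = Set.univ := by
  have hfin : ∀ a k : ℕ, (⟨a, k⟩ : J) ∈ A := fun a k => by
    obtain ⟨m, hm, hkm⟩ := h.exists_gt k
    exact hA.1 (Or.inr ⟨rfl, WithTop.coe_le_coe.2 hkm.le⟩) hm
  refine Set.eq_univ_of_forall fun ⟨a, n⟩ => ?_
  induction n using WithTop.recTopCoe with
  | top => exact hA.mk_top_mem (hfin a)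
  | coe k => exact hfin a k

lemma exists_column_max (hA : ScottClosed A) {x : J} (hx : x ∈ A) :
    ∃ p ∈ A, p.m = x.m ∧ ∀ y ∈ A, y.m = x.m → y ≤ p := by
  set D := {y ∈ A | y.m = x.m}
  have hD : IsChain (· ≤ ·) D := fun y hy z hz _ =>
    (le_total y.n z.n).imp (fun h => Or.inl ⟨hy.2.trans hz.2.symm, h⟩)
      fun h => Or.inl ⟨hz.2.trans hy.2.symm, h⟩
  obtain ⟨q, hq⟩ := J.dcpo D ⟨x, hx, rfl⟩ hD.directedOn
  refine ⟨q, hA.2 D (fun _ h => h.1) ⟨x, hx, rfl⟩ hD.directedOn q hq, ?_,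
    fun y hy hym => hq.1 ⟨hy, hym⟩⟩
  have hq_le : q ≤ ⟨x.m, ⊤⟩ := hq.2 fun y hy => Or.inl ⟨hy.2, le_top⟩
  rcases hq.1 ⟨hx, rfl⟩ with ⟨h, -⟩ | ⟨hqn, -⟩
  · exact h.symm
  · rcases hq_le with ⟨h, -⟩ | ⟨-, h⟩
    · exact h
    · exact absurd (hqn ▸ h) (WithTop.not_top_le_coe _)

/-- The only points outside column `a` above some `(a, k)` with `k ≥ t` are top points `(m, ∞)`
with `m ≥ t`, which `ht` keeps out of `A`. -/
lemma sep_column_lt (hA : ScottClosed A) (a t : ℕ) (ht : ∀ m ∈ topCols A, m < t) :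
    ScottClosed {x ∈ A | x.m = a → x.n < t} := by
  refine ⟨fun x y hyx hx => ⟨hA.1 hyx hx.1, fun hya => ?_⟩, ?_⟩
  · rcases hyx with ⟨h, hyx⟩ | ⟨hxn, hyx⟩
    · exact hyx.trans_lt (hx.2 (h ▸ hya))
    · have : x.m ∈ topCols A := by
        show (⟨x.m, ⊤⟩ : J) ∈ A
        rw [← hxn]
        exact hx.1
      exact hyx.trans_lt (WithTop.coe_lt_coe.2 (ht _ this))
  · intro D hDA hne hD q hq
    refine ⟨hA.2 D (fun _ h => (hDA h).1) hne hD q hq, fun hqa => ?_⟩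
    rcases directedOn_isGreatest_or_unbounded hne hD with ⟨d, hd⟩ | ⟨b, hcol, hub⟩
    · rw [hq.unique hd.isLUB] at hqa ⊢
      exact (hDA hd.1).2 hqa
    · obtain ⟨d, hd, htd⟩ := hub t
      rw [hq.unique (isLUB_of_unbounded hcol hub)] at hqa
      exact absurd ((hDA hd).2 (hcol d hd ▸ hqa)) (not_lt.2 htd.le)

end ScottClosed

namespace IrrClosed

variable {A : Set J}

lemma eq_Iic_of_column_max (hA : IrrClosed A) {p : J} (hp : p ∈ A)
    (hcol : ∀ x ∈ A, x.m = p.m → x ≤ p) (t : ℕ) (ht : ∀ m ∈ topCols A, m < t)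
    (htp : (t : WithTop ℕ) ≤ p.n) : A = Set.Iic p := by
  refine hA.eq_Iic_of_subset_union hp (hA.2.1.sep_column_lt p.m t ht)
    (fun h => not_lt.2 htp (h.2 rfl)) fun x hx => ?_
  by_cases hxm : x.m = p.m
  · exact Or.inl (hcol x hx hxm)
  · exact Or.inr ⟨hx, fun h => absurd h hxm⟩

lemma exists_eq_Iic (hA : IrrClosed A) (hA_ne : A ≠ Set.univ) : ∃ p : J, A = Set.Iic p := by
  have hfin : (topCols A).Finite :=
    Set.not_infinite.1 fun h => hA_ne (hA.2.1.eq_univ_of_infinite_topCols h)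
  rcases (topCols A).eq_empty_or_nonempty with h | ⟨a, ha⟩
  · obtain ⟨x, hx⟩ := hA.1
    obtain ⟨p, hp, hpm, hcol⟩ := hA.2.1.exists_column_max hx
    exact ⟨p, hA.eq_Iic_of_column_max hp (hpm ▸ hcol) 0 (by simp [h]) bot_le⟩
  · obtain ⟨c, hc⟩ := hfin.bddAbove
    exact ⟨⟨a, ⊤⟩, hA.eq_Iic_of_column_max ha (fun x _ hx => Or.inl ⟨hx, le_top⟩) (c + 1)
      (fun m hm => Nat.lt_succ_of_le (hc hm)) le_top⟩

end IrrClosed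

lemma irrClosed_univ : IrrClosed (Set.univ : Set J) := by
  refine ⟨⟨⟨0, 0⟩, trivial⟩, scottClosed_univ, fun F₁ F₂ h₁ h₂ hcover => ?_⟩
  have : (topCols F₁ ∪ topCols F₂).Infinite :=
    Set.infinite_univ.mono fun m _ => hcover (Set.mem_univ (⟨m, ⊤⟩ : J))
  rcases Set.infinite_union.1 this with h | h
  · exact Or.inl (h₁.eq_univ_of_infinite_topCols h).ge
  · exact Or.inr (h₂.eq_univ_of_infinite_topCols h).ge

lemma univ_ne_Iic (x : J) : (Set.univ : Set J) ≠ Set.Iic x := fun h => by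
  have : (⟨x.m + 1, ⊤⟩ : J) ∈ Set.Iic x := h ▸ Set.mem_univ _
  rcases this with ⟨h, -⟩ | ⟨-, h⟩
  · exact x.m.succ_ne_self h
  · exact WithTop.not_top_le_coe _ h

/-- Johnstone's poset is a dcpo; the whole space is an irreducible Scott
closed set which is not the closure (= principal downset) of any point; and every proper
nonempty irreducible Scott closed subset is a principal downset `↓(m,n)`. -/
theorem stmt8 :
    Dcpo J ∧ IrrClosed (Set.univ : Set J) ∧
    (∀ x : J, (Set.univ : Set J) ≠ Set.Iic x) ∧
    (∀ A : Set J, IrrClosed A → A ≠ Set.univ → ∃ p : J, A = Set.Iic p) :=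
  ⟨J.dcpo, irrClosed_univ, univ_ne_Iic, fun _ hA hA_ne => hA.exists_eq_Iic hA_ne⟩
end

section
/- A topological space X is both sober and T_D if and only if every irreducible closed subset of X is strongly irreducible (i.e., cannot be expressed as the supremum in the lattice of closed sets of any family of closed sets each strictly smaller than it). -/
/-!
A point `x` whose derived set `closure {x} \ {x}` is closed makes `closure {x}` strongly
irreducible: a family whose union avoided `x` would have its closure inside that derived set.
Conversely, every closed set `F` is the closure of the union of the point closures of its points,
so a strongly irreducible `F` is itself a point closure; applied to `closure {x}` written as the
closure of its derived set, this shows that `x` cannot lie in the closure of the derived set.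
-/

/-- A space is sober if every nonempty irreducible closed set is the closure of a
unique point. -/
def SoberSp (X : Type*) [TopologicalSpace X] : Prop :=
  ∀ F : Set X, IsClosed F → IsIrreducible F → ∃! x, F = closure {x}

/-- A space is `T_D` if every derived set `cl({x}) \ {x}` is closed. -/
def TD (X : Type*) [TopologicalSpace X] : Prop :=
  ∀ x : X, IsClosed (closure {x} \ {x})

/-- A closed set `F` is strongly irreducible if whenever `F` is the supremum in the
lattice of closed sets (i.e. the closure of the union) of a family of closed sets, then
`F` is one of them. -/
def StronglyIrreducible {X : Type*} [TopologicalSpace X] (F : Set X) : Prop :=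
  ∀ 𝒜 : Set (Set X), (∀ A ∈ 𝒜, IsClosed A) → F = closure (⋃₀ 𝒜) → F ∈ 𝒜

section

variable {X : Type*} [TopologicalSpace X]

theorem stronglyIrreducible_closure_singleton {x : X}
    (hx : IsClosed (closure {x} \ {x})) : StronglyIrreducible (closure {x}) := by
  intro 𝒜 h𝒜 hsup
  have hsub : ∀ A ∈ 𝒜, A ⊆ closure {x} := fun A hA =>
    hsup ▸ (Set.subset_sUnion_of_mem hA).trans subset_closure
  obtain ⟨A, hA, hxA⟩ : ∃ A ∈ 𝒜, x ∈ A := by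
    by_contra! hnot
    have hderived : ⋃₀ 𝒜 ⊆ closure {x} \ {x} := by
      rintro y ⟨A, hA, hyA⟩
      exact ⟨hsub A hA hyA, fun hyx => hnot A hA (hyx ▸ hyA)⟩
    have hxsup : x ∈ closure (⋃₀ 𝒜) := hsup ▸ subset_closure rfl
    exact (hx.closure_subset_iff.mpr hderived hxsup).2 rfl
  have hA_eq : A = closure {x} :=
    (hsub A hA).antisymm ((h𝒜 A hA).closure_subset_iff.mpr (Set.singleton_subset_iff.mpr hxA))
  exact hA_eq ▸ hA

theorem closure_biUnion_closure_singleton (S : Set X) :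
    closure (⋃ y ∈ S, closure {y}) = closure S := by
  refine (closure_minimal ?_ isClosed_closure).antisymm
    (closure_mono fun y hy => Set.mem_biUnion hy (subset_closure rfl))
  exact Set.iUnion₂_subset fun y hy => closure_mono (Set.singleton_subset_iff.mpr hy)

theorem StronglyIrreducible.exists_mem_eq_closure_singleton {F S : Set X}
    (hF : StronglyIrreducible F) (hFS : F = closure S) : ∃ x ∈ S, F = closure {x} := by
  have hsup : F = closure (⋃₀ ((fun y => closure {y}) '' S)) := by
    rw [Set.sUnion_image, closure_biUnion_closure_singleton, hFS]
  obtain ⟨x, hxS, hx⟩ := hF _ (by rintro _ ⟨y, -, rfl⟩; exact isClosed_closure) hsup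
  exact ⟨x, hxS, hx.symm⟩

theorem isClosed_closure_singleton_diff_of_stronglyIrreducible [T0Space X] {x : X}
    (hx : StronglyIrreducible (closure {x})) : IsClosed (closure {x} \ {x}) := by
  have hclosure_subset : closure (closure {x} \ {x}) ⊆ closure {x} :=
    closure_minimal Set.sdiff_subset isClosed_closure
  have hx_not_mem : x ∉ closure (closure {x} \ {x}) := by
    intro hx_mem
    have hclosure : closure {x} = closure (closure {x} \ {x}) :=
      (closure_minimal (Set.singleton_subset_iff.mpr hx_mem) isClosed_closure).antisymm hclosure_subset
    obtain ⟨y, ⟨-, hyx⟩, hy⟩ := hx.exists_mem_eq_closure_singleton hclosure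
    exact hyx (inseparable_iff_closure_eq.mpr hy.symm).eq
  have hsub : closure (closure {x} \ {x}) ⊆ closure {x} \ {x} := fun y hy =>
    ⟨hclosure_subset hy, fun hyx => hx_not_mem (hyx ▸ hy)⟩
  exact closure_subset_iff_isClosed.mp hsub

theorem soberSp_of_stronglyIrreducible [T0Space X]
    (h : ∀ F : Set X, IsClosed F → IsIrreducible F → StronglyIrreducible F) : SoberSp X := by
  intro F hFc hFi
  obtain ⟨x, -, hx⟩ := (h F hFc hFi).exists_mem_eq_closure_singleton hFc.closure_eq.symm
  exact ⟨x, hx, fun y hy => (inseparable_iff_closure_eq.mpr (hy.symm.trans hx)).eq⟩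

end

/-- a `T₀` space is sober and `T_D` iff every irreducible closed set is
strongly irreducible. -/
theorem stmt15 {X : Type*} [TopologicalSpace X] [T0Space X] :
    (SoberSp X ∧ TD X) ↔
      ∀ F : Set X, IsClosed F → IsIrreducible F → StronglyIrreducible F := by
  constructor
  · rintro ⟨hsober, htd⟩ F hFc hFi
    obtain ⟨x, rfl, -⟩ := hsober F hFc hFi
    exact stronglyIrreducible_closure_singleton (htd x)
  · intro h
    exact ⟨soberSp_of_stronglyIrreducible h, fun x =>
      isClosed_closure_singleton_diff_of_stronglyIrreducible
        (h _ isClosed_closure isIrreducible_singleton.closure)⟩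
end

section
/- In Kou's dcpo P, every element is the supremum of a directed set (indeed a chain) of down-linear elements: every element of P₀ is itself down-linear, and every x ∈ X satisfies x = ⋁{(k,x,x) : 0 < k < 1}, where each (k,x,x) is down-linear. -/
/-- Validity predicate for points of Kou's dcpo: `inl x` with `0 < x ≤ 1` (the set `X`),
and `inr (k,a,b)` with `0 < k < 1`, `0 < b ≤ a ≤ 1` (the set `P₀`). -/
def KouValid : ℝ ⊕ (ℝ × ℝ × ℝ) → Prop
  | .inl x => 0 < x ∧ x ≤ 1
  | .inr (k, a, b) => (0 < k ∧ k < 1) ∧ 0 < b ∧ b ≤ a ∧ a ≤ 1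

/-- The carrier of Kou's dcpo `P = X ∪ P₀`. -/
def Kou := {p : ℝ ⊕ (ℝ × ℝ × ℝ) // KouValid p}

/-- Kou's order on raw points. -/
def kle : ℝ ⊕ (ℝ × ℝ × ℝ) → ℝ ⊕ (ℝ × ℝ × ℝ) → Prop
  | .inl x, .inl y => x = y
  | .inl _, .inr _ => False
  | .inr (k₁, a₁, b₁), .inr (k₂, a₂, b₂) => k₁ ≤ k₂ ∧ a₁ = a₂ ∧ b₁ = b₂
  | .inr (k, _a, b), .inl x => _a = x ∨ (k * b ≤ x ∧ x < b)

instance : PartialOrder Kou where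
  le p q := kle p.val q.val
  le_refl p := by
    obtain ⟨(x | ⟨k, a, b⟩), hv⟩ := p <;> simp [kle]
  le_trans p q r hpq hqr := by
    obtain ⟨pv, hp⟩ := p; obtain ⟨qv, hq⟩ := q; obtain ⟨rv, hr⟩ := r
    rcases pv with x | ⟨k₁, a₁, b₁⟩ <;> rcases qv with y | ⟨k₂, a₂, b₂⟩ <;>
      rcases rv with z | ⟨k₃, a₃, b₃⟩ <;>
      simp only [kle, KouValid] at hpq hqr hp hq hr ⊢
    · exact hpq.trans hqr
    · subst hqr; exact hpq
    · obtain ⟨hk, ha, hb⟩ := hpq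
      rcases hqr with h | ⟨h1, h2⟩
      · exact Or.inl (ha.trans h)
      · refine Or.inr ⟨le_trans ?_ h1, hb ▸ h2⟩
        calc k₁ * b₁ = k₁ * b₂ := by rw [hb]
          _ ≤ k₂ * b₂ := by nlinarith [hq.2.1]
    · obtain ⟨hk, ha, hb⟩ := hpq
      obtain ⟨hk', ha', hb'⟩ := hqr
      exact ⟨hk.trans hk', ha.trans ha', hb.trans hb'⟩
  le_antisymm p q hpq hqp := by
    obtain ⟨pv, hp⟩ := p; obtain ⟨qv, hq⟩ := q
    rcases pv with x | ⟨k₁, a₁, b₁⟩ <;> rcases qv with y | ⟨k₂, a₂, b₂⟩ <;>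
      simp only [kle, KouValid] at hpq hqp hp hq
    · subst hpq; rfl
    · obtain ⟨hk, ha, hb⟩ := hpq
      obtain ⟨hk', -, -⟩ := hqp
      subst ha; subst hb
      have hkk : k₁ = k₂ := le_antisymm hk hk'
      subst hkk; rfl

/-! The elements of `P₀` with fixed `a, b` form a chain ordered by `k`, and nothing from `X`
lies below them, so every element of `P₀` is down-linear.  For `x ∈ X`, an upper bound of the
`(k, x, x)` lies in `X` (its `k` would have to be at least every `k < 1`), and if it is some
`y ≠ x` then `k x ≤ y < x` for all `k < 1`, which is impossible. -/

theorem le_of_forall_lt_one_mul_le_of_nonneg {α : Type*} [Field α] [LinearOrder α]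
    [IsStrictOrderedRing α] {x y : α} (hy : 0 ≤ y) (h : ∀ k, 0 < k → k < 1 → k * x ≤ y) :
    x ≤ y := by
  by_contra! hyx
  have hx : 0 < x := hy.trans_lt hyx
  obtain ⟨k, hyk, hk1⟩ := exists_between ((div_lt_one hx).2 hyx)
  have hk : 0 < k := (div_nonneg hy hx.le).trans_lt hyk
  exact (h k hk hk1).not_gt ((div_lt_iff₀ hx).1 hyk)

namespace Kou

def fiber (a b : ℝ) : Set Kou := {q | ∃ k, q.val = .inr (k, a, b)}

theorem isChain_fiber (a b : ℝ) : IsChain (· ≤ ·) (fiber a b) := by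
  rintro ⟨_, _⟩ ⟨k₁, rfl⟩ ⟨_, _⟩ ⟨k₂, rfl⟩ -
  rcases le_total k₁ k₂ with h | h
  · exact Or.inl ⟨h, rfl, rfl⟩
  · exact Or.inr ⟨h, rfl, rfl⟩

theorem Iic_subset_fiber {p : Kou} {k a b : ℝ} (hp : p.val = .inr (k, a, b)) :
    Set.Iic p ⊆ fiber a b := by
  obtain ⟨_, _⟩ := p
  subst hp
  rintro ⟨y | ⟨k', a', b'⟩, _⟩ hle
  · exact hle.elim
  · obtain ⟨-, rfl, rfl⟩ := hle
    exact ⟨k', rfl⟩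

theorem downLinear_of_val_eq_inr {p : Kou} (hp : ∃ t, p.val = .inr t) : DownLinear p := by
  obtain ⟨⟨k, a, b⟩, hp⟩ := hp
  exact (isChain_fiber a b).mono (Iic_subset_fiber hp)

theorem isLUB_diag (x : ℝ) (hx : 0 < x ∧ x ≤ 1) :
    IsLUB {q : Kou | ∃ k : ℝ, 0 < k ∧ k < 1 ∧ q.val = .inr (k, x, x)} ⟨.inl x, hx⟩ := by
  refine ⟨?_, ?_⟩
  · rintro ⟨_, _⟩ ⟨k, -, -, rfl⟩
    exact Or.inl rfl
  rintro ⟨q, hq⟩ hub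
  have above : ∀ k, 0 < k → k < 1 → kle (.inr (k, x, x)) q := fun k hk0 hk1 =>
    hub (a := ⟨.inr (k, x, x), ⟨hk0, hk1⟩, hx.1, le_rfl, hx.2⟩) ⟨k, hk0, hk1, rfl⟩
  rcases q with y | ⟨k', a', b'⟩
  · show x = y
    by_contra hxy
    have below : ∀ k, 0 < k → k < 1 → k * x ≤ y ∧ y < x := fun k hk0 hk1 =>
      (above k hk0 hk1).resolve_left hxy
    have hyx : y < x := (below (1 / 2) (by norm_num) (by norm_num)).2
    have hxy' : x ≤ y := le_of_forall_lt_one_mul_le_of_nonneg hq.1.le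
      fun k hk0 hk1 => (below k hk0 hk1).1
    exact hyx.not_ge hxy'
  · obtain ⟨hk'0, hk'1⟩ := hq.1
    have hk : (k' + 1) / 2 ≤ k' := (above _ (by linarith) (by linarith)).1
    linarith

end Kou

/-- in Kou's dcpo every element of `P₀` is down-linear, and every
`x ∈ X` is the supremum of the chain `{(k,x,x) : 0 < k < 1}` of down-linear elements. -/
theorem stmt18 :
    (∀ p : Kou, (∃ t : ℝ × ℝ × ℝ, p.val = Sum.inr t) → DownLinear p) ∧
    (∀ (x : ℝ) (hx : 0 < x ∧ x ≤ 1),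
      IsChain (· ≤ ·) {q : Kou | ∃ k : ℝ, 0 < k ∧ k < 1 ∧ q.val = Sum.inr (k, x, x)} ∧
      (∀ q ∈ {q : Kou | ∃ k : ℝ, 0 < k ∧ k < 1 ∧ q.val = Sum.inr (k, x, x)},
        DownLinear q) ∧
      IsLUB {q : Kou | ∃ k : ℝ, 0 < k ∧ k < 1 ∧ q.val = Sum.inr (k, x, x)}
        (⟨Sum.inl x, hx⟩ : Kou)) := by
  refine ⟨fun p => Kou.downLinear_of_val_eq_inr, fun x hx => ⟨?_, ?_, Kou.isLUB_diag x hx⟩⟩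
  · refine (Kou.isChain_fiber x x).mono ?_
    rintro q ⟨k, -, -, hq⟩
    exact ⟨k, hq⟩
  · rintro q ⟨k, -, -, hq⟩
    exact Kou.downLinear_of_val_eq_inr ⟨_, hq⟩
end
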